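/- Let Γ be a compact topological group acting linearly and continuously on ℝ^m via ρ : Γ → GL(m,ℝ), let σ₁, σ₂ : Γ → {±1} be continuous group homomorphisms, and let L ∈ M_m(ℝ) satisfy L·ρ(γ) = σ₂(γ)·ρ(γ)·L for all γ. Let μ be the normalized Haar measure on Γ, and on the space P^k of homogeneous polynomial functions ℝ^m → ℝ of degree k define π(F)(x) = ∫_Γ σ₁(γ)σ₂(γ)·F(ρ(γ)x) dμ(γ), π̄(F)(x) = ∫_Γ σ₁(γ)·F(ρ(γ)x) dμ(γ), and ad_L(F)(x) = ⟨∇F(x), Lx⟩. Then π(ad_L(F)) = ad_L(π̄(F)) for all F ∈ P^k; consequently π(ad_L(P^k)) = ad_L(π̄(P^k)) = ad_L(P^k_{σ₁}(Γ)), where P^k_{σ₁}(Γ) = {F ∈ P^k : F(ρ(γ)x) = σ₁(γ)F(x) for all γ, x}. -/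

import Mathlib

/-!
Averaging against Haar measure can be done coefficientwise on polynomials, because the
coefficients of `p ∘ ρ(γ)` depend continuously on `γ`. Hence `π̄` maps `P^k` into `P^k` and
commutes with every linear functional on polynomials, in particular with the directional
derivative at a point. Since `L ρ(γ) = σ₂(γ) ρ(γ) L`, differentiating `F ∘ ρ(γ)` along `L x` gives
`σ₂(γ) (ad_L F)(ρ(γ) x)`, and `σ₂² = 1` turns the character `σ₁` of `π̄` into the character
`σ₁ σ₂` of `π`. For the images: `π̄ F` is `σ₁`-equivariant because Haar measure on a compact group
is also right invariant, and `π̄` fixes the `σ₁`-equivariant functions.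
-/

open Matrix MeasureTheory

/-- The gradient of `F` w.r.t. the canonical inner product on `ℝ^m`. -/
noncomputable def gradVec {m : ℕ} (F : (Fin m → ℝ) → ℝ) (x : Fin m → ℝ) : Fin m → ℝ :=
  fun i => fderiv ℝ F x (Pi.single i 1)

/-- `F : ℝ^m → ℝ` is a homogeneous polynomial function of degree `k`. -/
def IsHomogPolyFun (m k : ℕ) (F : (Fin m → ℝ) → ℝ) : Prop :=
  ∃ p : MvPolynomial (Fin m) ℝ, p.IsHomogeneous k ∧ ∀ x, F x = MvPolynomial.eval x p

open MvPolynomial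

lemma Int.cast_units_mul_self {R : Type*} [Ring R] (u : ℤˣ) : ((u : ℤ) : R) * (u : ℤ) = 1 := by
  rw [← Int.cast_mul, Int.units_coe_mul_self, Int.cast_one]

lemma gradVec_dotProduct {m : ℕ} (F : (Fin m → ℝ) → ℝ) (x v : Fin m → ℝ) :
    gradVec F x ⬝ᵥ v = fderiv ℝ F x v := by
  conv_rhs => rw [← Finset.univ_sum_single v]
  simp only [gradVec, dotProduct, map_sum]
  refine Finset.sum_congr rfl fun i _ => ?_
  rw [mul_comm, ← smul_eq_mul, ← map_smul, ← Pi.single_smul, smul_eq_mul, mul_one]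

namespace MvPolynomial

section LinearSubst

variable {σ R : Type*} [Fintype σ] [CommRing R]

noncomputable def linearSubst (A : Matrix σ σ R) : MvPolynomial σ R →ₐ[R] MvPolynomial σ R :=
  bind₁ fun i => ∑ j, C (A i j) * X j

lemma eval_linearSubst (A : Matrix σ σ R) (p : MvPolynomial σ R) (x : σ → R) :
    eval x (linearSubst A p) = eval (A *ᵥ x) p := by
  rw [linearSubst, ← coe_aeval_eq_eval]
  refine (aeval_bind₁ x _ p).trans ?_
  rw [← coe_aeval_eq_eval (A *ᵥ x)]
  refine congrArg (fun f => aeval f p) (_root_.funext fun i => ?_)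
  simp [Matrix.mulVec, dotProduct]

lemma IsHomogeneous.linearSubst {p : MvPolynomial σ R} {k : ℕ} (hp : p.IsHomogeneous k)
    (A : Matrix σ σ R) : (linearSubst A p).IsHomogeneous k := by
  have h := hp.aeval (n := 1) (fun i => ∑ j, C (A i j) * X j) fun i =>
    IsHomogeneous.sum _ _ _ fun j _ => by simpa using (isHomogeneous_X R j).C_mul (A i j)
  rwa [one_mul] at h

lemma continuous_coeff_linearSubst [TopologicalSpace R] [IsTopologicalRing R]
    (p : MvPolynomial σ R) (d : σ →₀ ℕ) :
    Continuous fun A : Matrix σ σ R => coeff d (linearSubst A p) := by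
  induction p using MvPolynomial.induction_on generalizing d with
  | C a => simpa [linearSubst] using continuous_const
  | add p q hp hq =>
    simp only [map_add, coeff_add]
    exact (hp d).add (hq d)
  | mul_X p i hp =>
    classical
    have hcoeff : ∀ A : Matrix σ σ R, coeff d (linearSubst A (p * X i)) =
        ∑ j, A i j * if j ∈ d.support then coeff (d - Finsupp.single j 1) (linearSubst A p)
          else 0 := by
      intro A
      simp only [linearSubst, map_mul, bind₁_X_right, Finset.mul_sum, coeff_sum]
      refine Finset.sum_congr rfl fun j _ => ?_
      rw [mul_left_comm, coeff_C_mul, coeff_mul_X']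
    simp only [hcoeff]
    refine continuous_finsetSum _ fun j _ => (continuous_apply_apply i j).mul ?_
    split_ifs
    · exact hp _
    · exact continuous_const

lemma IsHomogeneous.support_subset_finsuppAntidiag [DecidableEq σ] {p : MvPolynomial σ R} {k : ℕ}
    (hp : p.IsHomogeneous k) : p.support ⊆ Finset.univ.finsuppAntidiag k := fun d hd => by
  rw [Finset.mem_finsuppAntidiag, ← Finsupp.degree_eq_sum, Finsupp.degree_eq_weight_one]
  exact ⟨hp (mem_support_iff.mp hd), Finset.subset_univ _⟩

end LinearSubst

section Integral

variable {Γ σ : Type*} [MeasurableSpace Γ]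

/-- Exponents outside `D` are dropped, so this is the integral of `P` only when every `P γ` is
supported in `D`. -/
noncomputable def integralPoly (μ : Measure Γ) (D : Finset (σ →₀ ℕ))
    (P : Γ → MvPolynomial σ ℝ) : MvPolynomial σ ℝ :=
  ∑ d ∈ D, monomial d (∫ γ, coeff d (P γ) ∂μ)

variable {μ : Measure Γ} {D : Finset (σ →₀ ℕ)} {P : Γ → MvPolynomial σ ℝ}

lemma map_integralPoly (ℓ : MvPolynomial σ ℝ →ₗ[ℝ] ℝ) (hsupp : ∀ γ, (P γ).support ⊆ D)
    (hint : ∀ d ∈ D, Integrable (fun γ => coeff d (P γ)) μ) :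
    ℓ (integralPoly μ D P) = ∫ γ, ℓ (P γ) ∂μ := by
  have hmono : ∀ d c, ℓ (monomial d c) = c * ℓ (monomial d 1) := fun d c => by
    rw [← smul_eq_mul, ← map_smul, smul_monomial, smul_eq_mul, mul_one]
  have hexpand : ∀ γ, ℓ (P γ) = ∑ d ∈ D, coeff d (P γ) * ℓ (monomial d 1) := fun γ => by
    conv_lhs => rw [(P γ).as_sum]
    rw [map_sum, Finset.sum_subset (hsupp γ) fun d _ hd => by
      rw [notMem_support_iff.mp hd, monomial_zero, map_zero]]
    exact Finset.sum_congr rfl fun d _ => hmono d _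
  simp only [hexpand, integralPoly, map_sum]
  rw [integral_finsetSum _ fun d hd => (hint d hd).mul_const _]
  exact Finset.sum_congr rfl fun d _ => by rw [hmono, integral_mul_const]

lemma IsHomogeneous.integralPoly {k : ℕ} (hP : ∀ γ, (P γ).IsHomogeneous k) :
    (integralPoly μ D P).IsHomogeneous k := by
  refine IsHomogeneous.sum _ _ _ fun d _ => ?_
  by_cases hd : d.degree = k
  · exact isHomogeneous_monomial _ hd
  · simp only [(hP _).coeff_eq_zero hd, integral_zero, monomial_zero]
    exact isHomogeneous_zero _ _ _

end Integral

section Derivative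

variable {σ : Type*} [Fintype σ]

lemma differentiable_eval (p : MvPolynomial σ ℝ) : Differentiable ℝ fun x : σ → ℝ => eval x p := by
  induction p using MvPolynomial.induction_on with
  | C a => simp
  | add p q hp hq => simpa using hp.fun_add hq
  | mul_X p i hp => simpa using hp.fun_mul (differentiable_apply i)

noncomputable def fderivEval (x v : σ → ℝ) : MvPolynomial σ ℝ →ₗ[ℝ] ℝ where
  toFun p := fderiv ℝ (fun y => eval y p) x v
  map_add' p q := by
    simp only [map_add]
    rw [fderiv_fun_add (differentiable_eval p x) (differentiable_eval q x)]
    rfl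
  map_smul' c p := by
    simp only [smul_eval]
    rw [fderiv_const_mul (differentiable_eval p x)]
    rfl

lemma fderivEval_apply (x v : σ → ℝ) (p : MvPolynomial σ ℝ) :
    fderivEval x v p = fderiv ℝ (fun y => eval y p) x v := rfl

end Derivative

end MvPolynomial

lemma fderiv_comp_mulVec_apply {ι E : Type*} [Fintype ι] [NormedAddCommGroup E] [NormedSpace ℝ E]
    {F : (ι → ℝ) → E} (A : Matrix ι ι ℝ) {x : ι → ℝ} (hF : DifferentiableAt ℝ F (A *ᵥ x))
    (v : ι → ℝ) : fderiv ℝ (fun y => F (A *ᵥ y)) x v = fderiv ℝ F (A *ᵥ x) (A *ᵥ v) := by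
  have h := hF.hasFDerivAt.comp x A.mulVecLin.toContinuousLinearMap.hasFDerivAt
  exact DFunLike.congr_fun h.fderiv v

noncomputable def homologicalOperator {ι : Type*} [Fintype ι] (L : Matrix ι ι ℝ)
    (F : (ι → ℝ) → ℝ) (x : ι → ℝ) : ℝ :=
  fderiv ℝ F x (L *ᵥ x)

/-- Compact groups are unimodular: `μ.map (· * g)` is again a left-invariant probability measure,
hence a multiple of `μ` of total mass one. -/
lemma isMulRightInvariant_of_isProbabilityMeasure {Γ : Type*} [Group Γ] [TopologicalSpace Γ]
    [IsTopologicalGroup Γ] [CompactSpace Γ] [MeasurableSpace Γ] [BorelSpace Γ]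
    (μ : Measure Γ) [μ.IsHaarMeasure] [IsProbabilityMeasure μ] : μ.IsMulRightInvariant := by
  refine ⟨fun g => ?_⟩
  have : IsProbabilityMeasure (μ.map (· * g)) :=
    Measure.isProbabilityMeasure_map (measurable_mul_const g).aemeasurable
  have h := Measure.isMulInvariant_eq_smul_of_compactSpace (μ.map (· * g)) μ
  have hc : (μ.map (· * g)).haarScalarFactor μ = 1 := by
    simpa using (congrArg (· Set.univ) h).symm
  rwa [hc, one_smul] at h

section CharAverage

variable {Γ ι : Type*} [Group Γ] [MeasurableSpace Γ] [Fintype ι] [DecidableEq ι]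
  {μ : Measure Γ} {χ : Γ →* ℤˣ} {ρ : Γ →* GL ι ℝ}

/-- `π̄ = charAverage μ σ₁ ρ` and `π = charAverage μ (σ₁ * σ₂) ρ`. -/
noncomputable def charAverage (μ : Measure Γ) (χ : Γ →* ℤˣ) (ρ : Γ →* GL ι ℝ)
    (F : (ι → ℝ) → ℝ) (x : ι → ℝ) : ℝ :=
  ∫ γ, ((χ γ : ℤ) : ℝ) * F ((ρ γ : Matrix ι ι ℝ) *ᵥ x) ∂μ

lemma charAverage_mulVec [MeasurableMul Γ] [μ.IsMulRightInvariant] (F : (ι → ℝ) → ℝ) (g : Γ)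
    (x : ι → ℝ) :
    charAverage μ χ ρ F ((ρ g : Matrix ι ι ℝ) *ᵥ x) = ((χ g : ℤ) : ℝ) * charAverage μ χ ρ F x := by
  -- substitute `γ ↦ γ * g`; the spare factor `χ g` cancels because `χ g ^ 2 = 1`
  have hshift : ∀ γ, ((χ g : ℤ) : ℝ) * (((χ (γ * g) : ℤ) : ℝ) * F ((ρ (γ * g) : Matrix ι ι ℝ) *ᵥ x))
      = ((χ γ : ℤ) : ℝ) * F ((ρ γ : Matrix ι ι ℝ) *ᵥ (ρ g : Matrix ι ι ℝ) *ᵥ x) := by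
    intro γ
    rw [Matrix.mulVec_mulVec, map_mul, map_mul, Units.val_mul, Units.val_mul, Int.cast_mul,
      mul_comm ((χ γ : ℤ) : ℝ), mul_assoc, ← mul_assoc, Int.cast_units_mul_self, one_mul]
  simp only [charAverage, ← hshift, integral_const_mul]
  rw [integral_mul_right_eq_self (fun γ => ((χ γ : ℤ) : ℝ) * F ((ρ γ : Matrix ι ι ℝ) *ᵥ x)) g]

lemma charAverage_eq_self [IsProbabilityMeasure μ] {F : (ι → ℝ) → ℝ}
    (hF : ∀ γ x, F ((ρ γ : Matrix ι ι ℝ) *ᵥ x) = ((χ γ : ℤ) : ℝ) * F x) :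
    charAverage μ χ ρ F = F :=
  funext fun x => by simp [charAverage, hF, ← mul_assoc, Int.cast_units_mul_self]

end CharAverage

section PolynomialAverage

variable {Γ ι : Type*} [Group Γ] [MeasurableSpace Γ] [Fintype ι] [DecidableEq ι]
  {μ : Measure Γ} {χ : Γ →* ℤˣ} {ρ : Γ →* GL ι ℝ} {p : MvPolynomial ι ℝ} {k : ℕ}

noncomputable def averagePoly (μ : Measure Γ) (χ : Γ →* ℤˣ) (ρ : Γ →* GL ι ℝ) (k : ℕ)
    (p : MvPolynomial ι ℝ) : MvPolynomial ι ℝ :=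
  integralPoly μ (Finset.univ.finsuppAntidiag k)
    fun γ => ((χ γ : ℤ) : ℝ) • linearSubst (ρ γ : Matrix ι ι ℝ) p

lemma MvPolynomial.IsHomogeneous.averagePoly (hp : p.IsHomogeneous k) :
    (averagePoly μ χ ρ k p).IsHomogeneous k :=
  IsHomogeneous.integralPoly fun γ => by
    rw [smul_eq_C_mul]
    exact (hp.linearSubst _).C_mul _

variable [TopologicalSpace Γ] [CompactSpace Γ] [OpensMeasurableSpace Γ]
  [IsFiniteMeasureOnCompacts μ]

lemma map_averagePoly (hρ : Continuous fun γ => (ρ γ : Matrix ι ι ℝ))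
    (hχ : Continuous fun γ => ((χ γ : ℤ) : ℝ)) (hp : p.IsHomogeneous k)
    (ℓ : MvPolynomial ι ℝ →ₗ[ℝ] ℝ) :
    ℓ (averagePoly μ χ ρ k p)
      = ∫ γ, ((χ γ : ℤ) : ℝ) * ℓ (linearSubst (ρ γ : Matrix ι ι ℝ) p) ∂μ := by
  have hsupp : ∀ γ, (((χ γ : ℤ) : ℝ) • linearSubst (ρ γ : Matrix ι ι ℝ) p).support ⊆
      Finset.univ.finsuppAntidiag k := fun γ =>
    support_smul.trans (hp.linearSubst _).support_subset_finsuppAntidiag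
  have hint : ∀ d ∈ Finset.univ.finsuppAntidiag k, Integrable
      (fun γ => coeff d (((χ γ : ℤ) : ℝ) • linearSubst (ρ γ : Matrix ι ι ℝ) p)) μ := by
    intro d _
    simp only [coeff_smul, smul_eq_mul]
    exact (hχ.mul ((continuous_coeff_linearSubst p d).comp hρ)).integrable_of_hasCompactSupport
      (.of_compactSpace _)
  rw [averagePoly, map_integralPoly ℓ hsupp hint]
  simp only [map_smul, smul_eq_mul]

lemma charAverage_eval (hρ : Continuous fun γ => (ρ γ : Matrix ι ι ℝ))
    (hχ : Continuous fun γ => ((χ γ : ℤ) : ℝ)) (hp : p.IsHomogeneous k) :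
    charAverage μ χ ρ (fun y => eval y p) = fun x => eval x (averagePoly μ χ ρ k p) := by
  funext x
  simpa [charAverage, eval_linearSubst] using
    (map_averagePoly (μ := μ) hρ hχ hp (aeval x).toLinearMap).symm

lemma fderiv_charAverage_eval (hρ : Continuous fun γ => (ρ γ : Matrix ι ι ℝ))
    (hχ : Continuous fun γ => ((χ γ : ℤ) : ℝ)) (hp : p.IsHomogeneous k) (x v : ι → ℝ) :
    fderiv ℝ (charAverage μ χ ρ fun y => eval y p) x v
      = ∫ γ, ((χ γ : ℤ) : ℝ) * fderiv ℝ (fun y => eval y p)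
          ((ρ γ : Matrix ι ι ℝ) *ᵥ x) ((ρ γ : Matrix ι ι ℝ) *ᵥ v) ∂μ := by
  rw [charAverage_eval hρ hχ hp, ← fderivEval_apply, map_averagePoly hρ hχ hp]
  simp only [fderivEval_apply, eval_linearSubst]
  congr 1
  funext γ
  rw [fderiv_comp_mulVec_apply _ (differentiable_eval p _)]

end PolynomialAverage

section HomogeneousPolynomialFunction

variable {Γ : Type*} [Group Γ] [TopologicalSpace Γ] [CompactSpace Γ] [MeasurableSpace Γ]
  [OpensMeasurableSpace Γ] {m k : ℕ} {μ : Measure Γ} [IsFiniteMeasureOnCompacts μ]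
  {ρ : Γ →* GL (Fin m) ℝ} {F : (Fin m → ℝ) → ℝ}

lemma isHomogPolyFun_iff :
    IsHomogPolyFun m k F ↔
      ∃ p : MvPolynomial (Fin m) ℝ, p.IsHomogeneous k ∧ F = fun x => eval x p :=
  exists_congr fun _ => and_congr_right fun _ => funext_iff.symm

lemma IsHomogPolyFun.charAverage {χ : Γ →* ℤˣ}
    (hρ : Continuous fun γ => (ρ γ : Matrix (Fin m) (Fin m) ℝ))
    (hχ : Continuous fun γ => ((χ γ : ℤ) : ℝ)) (hF : IsHomogPolyFun m k F) :
    IsHomogPolyFun m k (charAverage μ χ ρ F) := by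
  obtain ⟨p, hp, rfl⟩ := isHomogPolyFun_iff.mp hF
  exact isHomogPolyFun_iff.mpr ⟨_, hp.averagePoly, charAverage_eval hρ hχ hp⟩

lemma charAverage_homologicalOperator {σ₁ σ₂ : Γ →* ℤˣ} {L : Matrix (Fin m) (Fin m) ℝ}
    (hρ : Continuous fun γ => (ρ γ : Matrix (Fin m) (Fin m) ℝ))
    (hσ₁ : Continuous fun γ => ((σ₁ γ : ℤ) : ℝ))
    (hL : ∀ γ, L * (ρ γ : Matrix (Fin m) (Fin m) ℝ)
      = ((σ₂ γ : ℤ) : ℝ) • ((ρ γ : Matrix (Fin m) (Fin m) ℝ) * L))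
    (hF : IsHomogPolyFun m k F) :
    charAverage μ (σ₁ * σ₂) ρ (homologicalOperator L F)
      = homologicalOperator L (charAverage μ σ₁ ρ F) := by
  obtain ⟨p, hp, rfl⟩ := isHomogPolyFun_iff.mp hF
  funext x
  rw [homologicalOperator, fderiv_charAverage_eval hρ hσ₁ hp, charAverage]
  congr 1
  funext γ
  have hLρ : L *ᵥ (ρ γ : Matrix (Fin m) (Fin m) ℝ) *ᵥ x
      = ((σ₂ γ : ℤ) : ℝ) • (ρ γ : Matrix (Fin m) (Fin m) ℝ) *ᵥ L *ᵥ x := by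
    rw [mulVec_mulVec, hL, smul_mulVec, ← mulVec_mulVec]
  rw [homologicalOperator, hLρ, map_smul, smul_eq_mul, MonoidHom.mul_apply, Units.val_mul,
    Int.cast_mul, mul_assoc, ← mul_assoc ((σ₂ γ : ℤ) : ℝ), Int.cast_units_mul_self, one_mul]

end HomogeneousPolynomialFunction

theorem projection_commutes_with_homological_operator_general
    {Γ : Type*} [Group Γ] [TopologicalSpace Γ] [IsTopologicalGroup Γ] [CompactSpace Γ]
    [MeasurableSpace Γ] [BorelSpace Γ]
    (m : ℕ)
    (ρ : Γ →* Matrix.GeneralLinearGroup (Fin m) ℝ)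
    (hρ : Continuous fun γ => (ρ γ : Matrix (Fin m) (Fin m) ℝ))
    (σ₁ σ₂ : Γ →* ℤˣ)
    (hσ₁ : Continuous fun γ => ((σ₁ γ : ℤ) : ℝ))
    (L : Matrix (Fin m) (Fin m) ℝ)
    (hL : ∀ γ : Γ, L * (ρ γ : Matrix (Fin m) (Fin m) ℝ)
      = ((σ₂ γ : ℤ) : ℝ) • ((ρ γ : Matrix (Fin m) (Fin m) ℝ) * L))
    (μ : Measure Γ) [μ.IsHaarMeasure] [IsProbabilityMeasure μ]
    (k : ℕ)
    (Pj PjBar : ((Fin m → ℝ) → ℝ) → ((Fin m → ℝ) → ℝ))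
    (hPj : ∀ (F : (Fin m → ℝ) → ℝ) (x : Fin m → ℝ),
      Pj F x = ∫ γ, ((σ₁ γ : ℤ) : ℝ) * ((σ₂ γ : ℤ) : ℝ) *
        F ((ρ γ : Matrix (Fin m) (Fin m) ℝ) *ᵥ x) ∂μ)
    (hPjBar : ∀ (F : (Fin m → ℝ) → ℝ) (x : Fin m → ℝ),
      PjBar F x = ∫ γ, ((σ₁ γ : ℤ) : ℝ) *
        F ((ρ γ : Matrix (Fin m) (Fin m) ℝ) *ᵥ x) ∂μ)
    (adL : ((Fin m → ℝ) → ℝ) → ((Fin m → ℝ) → ℝ))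
    (hadL : ∀ (F : (Fin m → ℝ) → ℝ) (x : Fin m → ℝ), adL F x = gradVec F x ⬝ᵥ (L *ᵥ x)) :
    -- π(ad_L F) = ad_L(π̄ F) on P^k
    (∀ F, IsHomogPolyFun m k F → Pj (adL F) = adL (PjBar F)) ∧
    -- consequently π(ad_L(P^k)) = ad_L(P^k_{σ₁}(Γ))
    (∀ G : (Fin m → ℝ) → ℝ,
      (∃ F, IsHomogPolyFun m k F ∧ G = Pj (adL F)) ↔
      (∃ F, IsHomogPolyFun m k F ∧
        (∀ (γ : Γ) (x : Fin m → ℝ),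
          F ((ρ γ : Matrix (Fin m) (Fin m) ℝ) *ᵥ x) = ((σ₁ γ : ℤ) : ℝ) * F x) ∧
        G = adL F)) := by
  have := isMulRightInvariant_of_isProbabilityMeasure μ
  obtain rfl : Pj = charAverage μ (σ₁ * σ₂) ρ := by
    funext F x
    simp [hPj, charAverage]
  obtain rfl : PjBar = charAverage μ σ₁ ρ := funext₂ hPjBar
  obtain rfl : adL = homologicalOperator L := by
    funext F x
    rw [hadL, gradVec_dotProduct, homologicalOperator]
  have commute F (hF : IsHomogPolyFun m k F) :=
    charAverage_homologicalOperator (μ := μ) hρ hσ₁ hL hF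
  refine ⟨commute, fun G => ⟨?_, ?_⟩⟩
  · rintro ⟨F, hF, rfl⟩
    exact ⟨_, hF.charAverage hρ hσ₁, charAverage_mulVec F, commute F hF⟩
  · rintro ⟨F, hF, hFσ, rfl⟩
    exact ⟨F, hF, by rw [commute F hF, charAverage_eq_self hFσ]⟩

/-- π ∘ ad_L = ad_L ∘ π̄ on P^k, where π and π̄ are the Haar averaging
projections with characters σ₁σ₂ and σ₁; consequently π(ad_L(P^k)) = ad_L(P^k_{σ₁}(Γ)). -/
theorem projection_commutes_with_homological_operator
    {Γ : Type*} [Group Γ] [TopologicalSpace Γ] [IsTopologicalGroup Γ] [CompactSpace Γ]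
    [MeasurableSpace Γ] [BorelSpace Γ]
    (m : ℕ)
    (ρ : Γ →* Matrix.GeneralLinearGroup (Fin m) ℝ)
    (hρ : Continuous fun γ => (ρ γ : Matrix (Fin m) (Fin m) ℝ))
    (σ₁ σ₂ : Γ →* ℤˣ)
    (hσ₁ : Continuous fun γ => ((σ₁ γ : ℤ) : ℝ))
    (hσ₂ : Continuous fun γ => ((σ₂ γ : ℤ) : ℝ))
    (L : Matrix (Fin m) (Fin m) ℝ)
    (hL : ∀ γ : Γ, L * (ρ γ : Matrix (Fin m) (Fin m) ℝ)
      = ((σ₂ γ : ℤ) : ℝ) • ((ρ γ : Matrix (Fin m) (Fin m) ℝ) * L))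
    (μ : Measure Γ) [μ.IsHaarMeasure] [IsProbabilityMeasure μ]
    (k : ℕ) (hk : 1 ≤ k)
    (Pj PjBar : ((Fin m → ℝ) → ℝ) → ((Fin m → ℝ) → ℝ))
    (hPj : ∀ (F : (Fin m → ℝ) → ℝ) (x : Fin m → ℝ),
      Pj F x = ∫ γ, ((σ₁ γ : ℤ) : ℝ) * ((σ₂ γ : ℤ) : ℝ) *
        F ((ρ γ : Matrix (Fin m) (Fin m) ℝ) *ᵥ x) ∂μ)
    (hPjBar : ∀ (F : (Fin m → ℝ) → ℝ) (x : Fin m → ℝ),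
      PjBar F x = ∫ γ, ((σ₁ γ : ℤ) : ℝ) *
        F ((ρ γ : Matrix (Fin m) (Fin m) ℝ) *ᵥ x) ∂μ)
    (adL : ((Fin m → ℝ) → ℝ) → ((Fin m → ℝ) → ℝ))
    (hadL : ∀ (F : (Fin m → ℝ) → ℝ) (x : Fin m → ℝ), adL F x = gradVec F x ⬝ᵥ (L *ᵥ x)) :
    -- π(ad_L F) = ad_L(π̄ F) on P^k
    (∀ F, IsHomogPolyFun m k F → Pj (adL F) = adL (PjBar F)) ∧
    -- consequently π(ad_L(P^k)) = ad_L(P^k_{σ₁}(Γ))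
    (∀ G : (Fin m → ℝ) → ℝ,
      (∃ F, IsHomogPolyFun m k F ∧ G = Pj (adL F)) ↔
      (∃ F, IsHomogPolyFun m k F ∧
        (∀ (γ : Γ) (x : Fin m → ℝ),
          F ((ρ γ : Matrix (Fin m) (Fin m) ℝ) *ᵥ x) = ((σ₁ γ : ℤ) : ℝ) * F x) ∧
        G = adL F)) :=
  projection_commutes_with_homological_operator_general m ρ hρ σ₁ σ₂ hσ₁ L hL μ k Pj PjBar hPj
    hPjBar adL hadL
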